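/- arXiv:1201.1170 — 7 statements merged into one kernel-verified Lean document; each statement's English description precedes it below -/
import Mathlib

section
/- For a compact interval A = [a* − ε, a* + ε] with a* > 0 and a* − ε > 0, and a compact interval Y = [y1, y2], the Lebesgue measure of the product set A·Y = {a·y : a ∈ A, y ∈ Y} equals a*·μ(Y) + ε·β(Y), where β(Y) = y2 + y1 if 0 ≤ y1, β(Y) = y2 − y1 if y1 < 0 < y2, and β(Y) = −y2 − y1 if y2 ≤ 0. -/
open MeasureTheory Set Pointwise

lemma Icc_mul_Icc_eq (p q y1 y2 : ℝ) (hp : 0 < p) (hpq : p ≤ q) (hy : y1 ≤ y2) :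
    Icc p q * Icc y1 y2 = Icc (min (p * y1) (q * y1)) (max (p * y2) (q * y2)) := by
  have hq : 0 < q := hp.trans_le hpq
  have hS : Icc p q * Icc y1 y2 = (fun t : ℝ × ℝ => t.1 * t.2) '' (Icc p q ×ˢ Icc y1 y2) := by
    rw [← Set.image2_mul, ← Set.image_prod]
  apply le_antisymm
  · rintro x ⟨u, ⟨hu1, hu2⟩, v, ⟨hv1, hv2⟩, rfl⟩
    beta_reduce
    have hu0 : 0 < u := lt_of_lt_of_le hp hu1
    constructor
    · have h1 : min (p * y1) (q * y1) ≤ u * y1 := by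
        rcases le_or_gt 0 y1 with h | h
        · exact (min_le_left _ _).trans (by nlinarith)
        · exact (min_le_right _ _).trans (by nlinarith)
      exact h1.trans (by nlinarith)
    · have h1 : u * y2 ≤ max (p * y2) (q * y2) := by
        rcases le_or_gt 0 y2 with h | h
        · exact le_trans (by nlinarith) (le_max_right _ _)
        · exact le_trans (by nlinarith) (le_max_left _ _)
      exact le_trans (by nlinarith) h1
  · rw [hS]
    have hconn : IsPreconnected ((fun t : ℝ × ℝ => t.1 * t.2) '' (Icc p q ×ˢ Icc y1 y2)) :=
      ((isPreconnected_Icc.prod isPreconnected_Icc).image _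
        (Continuous.continuousOn (by continuity)))
    have hmemlo : min (p * y1) (q * y1) ∈ (fun t : ℝ × ℝ => t.1 * t.2) '' (Icc p q ×ˢ Icc y1 y2) := by
      rcases le_total (p * y1) (q * y1) with h | h
      · rw [min_eq_left h]
        exact ⟨(p, y1), ⟨left_mem_Icc.2 hpq, left_mem_Icc.2 hy⟩, rfl⟩
      · rw [min_eq_right h]
        exact ⟨(q, y1), ⟨right_mem_Icc.2 hpq, left_mem_Icc.2 hy⟩, rfl⟩
    have hmemhi : max (p * y2) (q * y2) ∈ (fun t : ℝ × ℝ => t.1 * t.2) '' (Icc p q ×ˢ Icc y1 y2) := by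
      rcases le_total (p * y2) (q * y2) with h | h
      · rw [max_eq_right h]
        exact ⟨(q, y2), ⟨right_mem_Icc.2 hpq, right_mem_Icc.2 hy⟩, rfl⟩
      · rw [max_eq_left h]
        exact ⟨(p, y2), ⟨left_mem_Icc.2 hpq, right_mem_Icc.2 hy⟩, rfl⟩
    exact hconn.Icc_subset hmemlo hmemhi

theorem volume_product_interval_pos (a ε y1 y2 : ℝ)
    (hε : 0 ≤ ε) (ha : 0 < a) (haε : 0 < a - ε) (hy : y1 ≤ y2) :
    (volume (Icc (a - ε) (a + ε) * Icc y1 y2)).toReal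
      = a * (y2 - y1) + ε * (if 0 ≤ y1 then y2 + y1
          else if y2 ≤ 0 then -y2 - y1 else y2 - y1) := by
  have hpq : (a - ε : ℝ) ≤ a + ε := by linarith
  rw [Icc_mul_Icc_eq _ _ _ _ haε hpq hy, Real.volume_Icc, ENNReal.toReal_ofReal]
  · rcases le_or_gt 0 y1 with h1 | h1
    · have hy2 : 0 ≤ y2 := h1.trans hy
      rw [if_pos h1, min_eq_left (by nlinarith), max_eq_right (by nlinarith)]
      ring
    · rw [if_neg (not_le.2 h1), min_eq_right (by nlinarith)]
      rcases le_or_gt y2 0 with h2 | h2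
      · rw [if_pos h2, max_eq_left (by nlinarith)]; ring
      · rw [if_neg (not_le.2 h2), max_eq_right (by nlinarith)]; ring
  · have h1 : min ((a-ε) * y1) ((a+ε) * y1) ≤ (a+ε) * y1 := min_le_right _ _
    have h2 : (a+ε) * y2 ≤ max ((a-ε) * y2) ((a+ε) * y2) := le_max_right _ _
    have : (a+ε) * y1 ≤ (a+ε) * y2 := by nlinarith
    linarith
end

section
/- For a compact interval A = [a* − ε, a* + ε] with a* < 0 and a* + ε < 0, and a compact interval Y = [y1, y2], the Lebesgue measure of the product set A·Y equals |a*|·μ(Y) + ε·β(Y), where β is defined as: β(Y) = y2 + y1 if 0 ≤ y1, β(Y) = y2 − y1 if y1 < 0 < y2, and β(Y) = −y2 − y1 if y2 ≤ 0. -/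
open MeasureTheory Set Pointwise

lemma mul_Icc_eq_Icc_aux {a1 a2 b1 b2 m M : ℝ}
    (hm : m ∈ Icc a1 a2 * Icc b1 b2) (hM : M ∈ Icc a1 a2 * Icc b1 b2)
    (hb : ∀ x ∈ Icc a1 a2, ∀ y ∈ Icc b1 b2, x * y ∈ Icc m M) :
    Icc a1 a2 * Icc b1 b2 = Icc m M := by
  have hne : (Icc a1 a2 * Icc b1 b2).Nonempty := ⟨m, hm⟩
  have himg : Icc a1 a2 * Icc b1 b2
      = (fun p : ℝ × ℝ => p.1 * p.2) '' (Icc a1 a2 ×ˢ Icc b1 b2) := by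
    rw [← Set.image2_mul, ← Set.image_uncurry_prod]; rfl
  have hpre : IsPreconnected (Icc a1 a2 * Icc b1 b2) := by
    rw [himg]
    exact (isPreconnected_Icc.prod isPreconnected_Icc).image _
      (continuous_fst.mul continuous_snd).continuousOn
  have hcomp : IsCompact (Icc a1 a2 * Icc b1 b2) := by
    rw [himg]
    exact ((isCompact_Icc.prod isCompact_Icc).image
      (continuous_fst.mul continuous_snd))
  have heq := eq_Icc_of_connected_compact ⟨hne, hpre⟩ hcomp
  have hub : ∀ z ∈ Icc a1 a2 * Icc b1 b2, z ∈ Icc m M := by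
    intro z hz
    rcases Set.mem_mul.1 hz with ⟨x, hx, y, hy, rfl⟩
    exact hb x hx y hy
  have hInf : sInf (Icc a1 a2 * Icc b1 b2) = m :=
    IsLeast.csInf_eq ⟨hm, fun z hz => (hub z hz).1⟩
  have hSup : sSup (Icc a1 a2 * Icc b1 b2) = M :=
    IsGreatest.csSup_eq ⟨hM, fun z hz => (hub z hz).2⟩
  rw [heq, hInf, hSup]

theorem volume_product_interval_neg (a ε y1 y2 : ℝ)
    (hε : 0 ≤ ε) (ha : a < 0) (haε : a + ε < 0) (hy : y1 ≤ y2) :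
    (volume (Icc (a - ε) (a + ε) * Icc y1 y2)).toReal
      = |a| * (y2 - y1) + ε * (if 0 ≤ y1 then y2 + y1
          else if y2 ≤ 0 then -y2 - y1 else y2 - y1) := by
  have haa : a - ε ≤ a + ε := by linarith
  have habs : |a| = -a := abs_of_neg ha
  by_cases h1 : 0 ≤ y1
  · -- m = (a-ε)*y2, M = (a+ε)*y1
    have hset : Icc (a - ε) (a + ε) * Icc y1 y2
        = Icc ((a - ε) * y2) ((a + ε) * y1) := by
      apply mul_Icc_eq_Icc_aux
      · exact Set.mul_mem_mul ⟨le_refl _, haa⟩ ⟨hy, le_refl _⟩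
      · exact Set.mul_mem_mul ⟨haa, le_refl _⟩ ⟨le_refl _, hy⟩
      · rintro x ⟨hx1, hx2⟩ y ⟨hy1, hy2⟩
        constructor <;> nlinarith
    rw [hset, Real.volume_Icc, ENNReal.toReal_ofReal (by nlinarith), if_pos h1]
    nlinarith [abs_of_neg ha]
  · by_cases h2 : y2 ≤ 0
    · -- m = (a+ε)*y2, M = (a-ε)*y1
      have hset : Icc (a - ε) (a + ε) * Icc y1 y2
          = Icc ((a + ε) * y2) ((a - ε) * y1) := by
        apply mul_Icc_eq_Icc_aux
        · exact Set.mul_mem_mul ⟨haa, le_refl _⟩ ⟨hy, le_refl _⟩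
        · exact Set.mul_mem_mul ⟨le_refl _, haa⟩ ⟨le_refl _, hy⟩
        · rintro x ⟨hx1, hx2⟩ y ⟨hy1, hy2⟩
          constructor <;> nlinarith
      rw [hset, Real.volume_Icc, ENNReal.toReal_ofReal (by nlinarith),
        if_neg h1, if_pos h2]
      nlinarith [abs_of_neg ha]
    · push_neg at h1 h2
      -- m = (a-ε)*y2, M = (a-ε)*y1
      have hset : Icc (a - ε) (a + ε) * Icc y1 y2
          = Icc ((a - ε) * y2) ((a - ε) * y1) := by
        apply mul_Icc_eq_Icc_aux
        · exact Set.mul_mem_mul ⟨le_refl _, haa⟩ ⟨hy, le_refl _⟩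
        · exact Set.mul_mem_mul ⟨le_refl _, haa⟩ ⟨le_refl _, hy⟩
        · rintro x ⟨hx1, hx2⟩ y ⟨hy1, hy2⟩
          constructor <;> nlinarith
      rw [hset, Real.volume_Icc, ENNReal.toReal_ofReal (by nlinarith),
        if_neg (not_le.2 h1), if_neg (not_le.2 h2)]
      nlinarith [abs_of_neg ha]
end

section
/- Let A = [a* − ε, a* + ε] with ε ≥ 0 and |a*| − ε > 0. Over all intervals Y of the form [−σ/2 + (σ/N)i, −σ/2 + (σ/N)(i+1)] for i ∈ {0, …, N−1} (subintervals of [−σ/2, σ/2] of length σ/N, with integer N ≥ 2 and σ > 0), the maximum of the Lebesgue measure of the product set A·Y equals ((|a*| + (N−1)ε)/N)·σ. -/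
open MeasureTheory Set Pointwise

private lemma aux_subset_nonpos {p q c d : ℝ} (hp : 0 < p) (hpq : p ≤ q) (hd : d ≤ 0) :
    Icc p q * Icc c d ⊆ Icc (q*c) (p*d) := by
  rintro z hz
  rw [Set.mem_mul] at hz
  obtain ⟨x, hx, y, hy, rfl⟩ := hz
  obtain ⟨hx1, hx2⟩ := hx; obtain ⟨hy1, hy2⟩ := hy
  constructor <;> nlinarith

private lemma aux_subset_nonneg {p q c d : ℝ} (hp : 0 < p) (hpq : p ≤ q) (hc : 0 ≤ c) :
    Icc p q * Icc c d ⊆ Icc (p*c) (q*d) := by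
  rintro z hz
  rw [Set.mem_mul] at hz
  obtain ⟨x, hx, y, hy, rfl⟩ := hz
  obtain ⟨hx1, hx2⟩ := hx; obtain ⟨hy1, hy2⟩ := hy
  constructor <;> nlinarith

private lemma aux_subset_mid {p q c d : ℝ} (hp : 0 < p) (hpq : p ≤ q) (hc : c ≤ 0) (hd : 0 ≤ d) :
    Icc p q * Icc c d ⊆ Icc (q*c) (q*d) := by
  rintro z hz
  rw [Set.mem_mul] at hz
  obtain ⟨x, hx, y, hy, rfl⟩ := hz
  obtain ⟨hx1, hx2⟩ := hx; obtain ⟨hy1, hy2⟩ := hy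
  rcases le_total y 0 with hy | hy
  · constructor <;> nlinarith
  · constructor <;> nlinarith

private lemma aux_eq_nonpos {p q c d : ℝ} (hp : 0 < p) (hpq : p ≤ q) (hcd : c ≤ d)
    (hd : d ≤ 0) : Icc p q * Icc c d = Icc (q*c) (p*d) := by
  refine Subset.antisymm (aux_subset_nonpos hp hpq hd) ?_
  rintro z ⟨h1, h2⟩
  have hq : 0 < q := lt_of_lt_of_le hp hpq
  rw [Set.mem_mul]
  rcases le_or_gt z (q*d) with hz | hz
  · refine ⟨q, ⟨hpq, le_refl q⟩, z/q, ⟨?_, ?_⟩, by field_simp⟩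
    · rw [le_div_iff₀ hq]; nlinarith
    · rw [div_le_iff₀ hq]; nlinarith
  · have hd0 : d < 0 := by
      rcases lt_or_ge d 0 with h | h
      · exact h
      · exfalso; nlinarith
    refine ⟨z/d, ⟨?_, ?_⟩, d, ⟨hcd, le_refl d⟩, div_mul_cancel₀ z hd0.ne⟩
    · rw [le_div_iff_of_neg hd0]; nlinarith
    · rw [div_le_iff_of_neg hd0]; nlinarith

private lemma aux_vol_le {S : Set ℝ} {m M t : ℝ} (hS : S ⊆ Icc m M)
    (h : M - m ≤ t) (ht : 0 ≤ t) : (volume S).toReal ≤ t := by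
  have h1 : volume S ≤ volume (Icc m M) := measure_mono hS
  rw [Real.volume_Icc] at h1
  calc (volume S).toReal ≤ (ENNReal.ofReal (M - m)).toReal :=
        ENNReal.toReal_mono ENNReal.ofReal_ne_top h1
    _ = max (M - m) 0 := ENNReal.toReal_ofReal'
    _ ≤ t := max_le h ht

private lemma aux_key (a ε σ : ℝ) (N : ℕ)
    (hε : 0 ≤ ε) (ha : 0 < a - ε) (hσ : 0 < σ) (hN : 2 ≤ N) :
    IsGreatest
      ((fun i : ℕ =>
          (volume (Icc (a - ε) (a + ε) *
            Icc (-σ/2 + σ/N * i) (-σ/2 + σ/N * (i+1)))).toReal) ''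
        {i : ℕ | i < N})
      ((a + (N - 1) * ε) / N * σ) := by
  have hn2 : (2:ℝ) ≤ (N:ℝ) := by exact_mod_cast hN
  have hn0 : (0:ℝ) < (N:ℝ) := by linarith
  have ha0 : 0 < a := by linarith
  have hu0 : 0 < σ/(N:ℝ) := div_pos hσ hn0
  have ht : 0 ≤ (a + ((N:ℝ) - 1) * ε) / N * σ := by
    apply mul_nonneg _ hσ.le
    apply div_nonneg _ hn0.le
    nlinarith
  have htgt : (a + ((N:ℝ) - 1) * ε) / N * σ = (a + ((N:ℝ) - 1) * ε) * (σ/N) := by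
    ring
  constructor
  · refine ⟨0, by simpa using (by omega : 0 < N), ?_⟩
    have hc : -σ/2 + σ/(N:ℝ) * ((0:ℕ):ℝ) = -σ/2 := by push_cast; ring
    have hd : -σ/2 + σ/(N:ℝ) * (((0:ℕ):ℝ)+1) = -σ/2 + σ/N := by push_cast; ring
    simp only [hc, hd]
    have hdle : -σ/2 + σ/(N:ℝ) ≤ 0 := by
      have h2 : σ/(N:ℝ) ≤ σ/2 := by
        apply div_le_div_of_nonneg_left hσ.le (by norm_num) hn2
      linarith
    rw [aux_eq_nonpos ha (by linarith) (by linarith) hdle, Real.volume_Icc]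
    have e : (a - ε) * (-σ/2 + σ/(N:ℝ)) - (a + ε) * (-σ/2)
        = (a + ((N:ℝ) - 1) * ε) / N * σ := by
      field_simp
      ring
    rw [e, ENNReal.toReal_ofReal ht]
  · rintro v ⟨i, hi, rfl⟩
    simp only [mem_setOf_eq] at hi
    dsimp only
    have hir : (i:ℝ) ≤ (N:ℝ) - 1 := by
      have : (i:ℝ) + 1 ≤ (N:ℝ) := by exact_mod_cast hi
      linarith
    have hi0 : (0:ℝ) ≤ (i:ℝ) := Nat.cast_nonneg i
    rw [show -σ/2 + σ/(N:ℝ) * ((i:ℝ)+1) = (-σ/2 + σ/(N:ℝ) * (i:ℝ)) + σ/N from by ring,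
      htgt]
    set u := σ/(N:ℝ) with hu
    set c := -σ/2 + u * (i:ℝ) with hc
    have hσu : σ = (N:ℝ) * u := by rw [hu]; field_simp
    have ht' : 0 ≤ (a + ((N:ℝ) - 1) * ε) * u := by nlinarith
    have hεc : ε * c = -(ε*(N:ℝ)*u)/2 + ε*u*(i:ℝ) := by rw [hc, hσu]; ring
    clear_value u c
    rcases le_or_gt (c + u) 0 with h1 | h1
    · refine aux_vol_le (aux_subset_nonpos ha (by linarith) h1) ?_ ht'
      have hεui : 0 ≤ ε * u * (i:ℝ) := by positivity
      nlinarith [hεui, hεc]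
    · rcases le_or_gt 0 c with h2 | h2
      · refine aux_vol_le (aux_subset_nonneg ha (by linarith) h2) ?_ ht'
        have hεu : 0 ≤ ε * u * ((N:ℝ) - 1 - (i:ℝ)) := by
          apply mul_nonneg (mul_nonneg hε hu0.le); linarith
        nlinarith [hεu, hεc]
      · refine aux_vol_le (aux_subset_mid ha (by linarith) h2.le h1.le) ?_ ht'
        have hεu : 0 ≤ ε * u * ((N:ℝ) - 2) := by
          apply mul_nonneg (mul_nonneg hε hu0.le); linarith
        nlinarith [hεu]

theorem max_volume_product_quantizer_cells (a ε σ : ℝ) (N : ℕ)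
    (hε : 0 ≤ ε) (ha : 0 < |a| - ε) (hσ : 0 < σ) (hN : 2 ≤ N) :
    IsGreatest
      ((fun i : ℕ =>
          (volume (Icc (a - ε) (a + ε) *
            Icc (-σ/2 + σ/N * i) (-σ/2 + σ/N * (i+1)))).toReal) ''
        {i : ℕ | i < N})
      ((|a| + (N - 1) * ε) / N * σ) := by
  rcases lt_trichotomy a 0 with hneg | h0 | hpos
  · have key := aux_key (-a) ε σ N hε (by rwa [abs_of_neg hneg] at ha) hσ hN
    rw [abs_of_neg hneg]
    have hf : (fun i : ℕ =>
          (volume (Icc (a - ε) (a + ε) *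
            Icc (-σ/2 + σ/N * i) (-σ/2 + σ/N * (i+1)))).toReal)
        = (fun i : ℕ =>
          (volume (Icc (-a - ε) (-a + ε) *
            Icc (-σ/2 + σ/N * i) (-σ/2 + σ/N * (i+1)))).toReal) := by
      funext i
      rw [show Icc (a - ε) (a + ε) = -(Icc (-a - ε) (-a + ε)) from by
          rw [show (-a - ε : ℝ) = -(a + ε) from by ring,
            show (-a + ε : ℝ) = -(a - ε) from by ring, Set.neg_Icc, neg_neg, neg_neg],
        neg_mul, Measure.measure_neg]
    rw [hf]
    exact key
  · exfalso; rw [h0, abs_zero] at ha; linarith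
  · rw [abs_of_pos hpos]
    exact aux_key a ε σ N hε (by rwa [abs_of_pos hpos] at ha) hσ hN
end

section
/- Let σ : ℕ → ℝ be a sequence of positive random variables and η : ℕ → ℝ a sequence of positive random variables such that for each k, η_k is independent of σ_{k−n+1}, E[η_k²] = c for a constant c, and σ_{k+1} ≥ η_k·σ_{k−n+1} almost surely. If E[σ_k²] → 0 as k → ∞, then c < 1. -/
/-!
Write `f k = E[σ_k²]`. Squaring the recursion and using independence gives
`f (m + n) ≥ E[η²] E[σ_m²] = c f m`. If `c ≥ 1`, the subsequence `f (j n)` is therefore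
nondecreasing, so it stays above `f 0 > 0` and cannot tend to `0`.
-/

open MeasureTheory ProbabilityTheory Filter

lemma integral_pos_of_ae_pos {α : Type*} [MeasurableSpace α] {μ : Measure α} [NeZero μ]
    {f : α → ℝ} (hf : ∀ᵐ x ∂μ, 0 < f x) (hfi : Integrable f μ) : 0 < ∫ x, f x ∂μ := by
  rw [integral_pos_iff_support_of_nonneg_ae (hf.mono fun _ h => h.le) hfi]
  exact pos_iff_ne_zero.2 (frequently_ae_iff.1 (hf.mono fun _ h => h.ne').frequently)

lemma ProbabilityTheory.IndepFun.integral_sq_mul_integral_sq_le {Ω : Type*} [MeasurableSpace Ω] {μ : Measure Ω}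
    {X Y Z : Ω → ℝ} (hXY : IndepFun X Y μ)
    (hX : AEStronglyMeasurable (fun ω => X ω ^ 2) μ)
    (hY : AEStronglyMeasurable (fun ω => Y ω ^ 2) μ)
    (hZ : Integrable (fun ω => Z ω ^ 2) μ)
    (hXY_nonneg : ∀ᵐ ω ∂μ, 0 ≤ X ω * Y ω) (hle : ∀ᵐ ω ∂μ, X ω * Y ω ≤ Z ω) :
    (∫ ω, X ω ^ 2 ∂μ) * ∫ ω, Y ω ^ 2 ∂μ ≤ ∫ ω, Z ω ^ 2 ∂μ := by
  have hXY_sq : IndepFun (fun ω => X ω ^ 2) (fun ω => Y ω ^ 2) μ :=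
    hXY.comp (φ := fun x => x ^ 2) (ψ := fun x => x ^ 2) (by fun_prop) (by fun_prop)
  rw [← hXY_sq.integral_fun_mul_eq_mul_integral hX hY]
  refine integral_mono_of_nonneg (.of_forall fun ω => by positivity) hZ ?_
  filter_upwards [hXY_nonneg, hle] with ω h0 h
  rw [← mul_pow]
  exact pow_le_pow_left₀ h0 h 2

lemma not_tendsto_zero_of_le_mul_le_add {f : ℕ → ℝ} {c : ℝ} {n : ℕ} (hn : 1 ≤ n) (hc : 1 ≤ c)
    (hf0 : 0 < f 0) (hf : ∀ m, 0 ≤ f m) (hstep : ∀ m, c * f m ≤ f (m + n)) :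
    ¬ Tendsto f atTop (nhds 0) := by
  have hmono : ∀ j, f 0 ≤ f (j * n) := by
    intro j
    induction j with
    | zero => simp
    | succ j ih =>
      calc f 0 ≤ f (j * n) := ih
        _ ≤ c * f (j * n) := le_mul_of_one_le_left (hf _) hc
        _ ≤ f ((j + 1) * n) := by rw [add_one_mul]; exact hstep _
  intro hlim
  have hsub : Tendsto (fun j => f (j * n)) atTop (nhds 0) :=
    hlim.comp (tendsto_atTop_mono (fun j => Nat.le_mul_of_pos_right j hn) tendsto_id)
  obtain ⟨j, hj⟩ := (hsub.eventually (eventually_lt_nhds hf0)).exists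
  exact (hmono j).not_gt hj

theorem mss_necessary_contraction
    {Ω : Type*} [MeasurableSpace Ω] (μ : Measure Ω) [IsProbabilityMeasure μ]
    (n : ℕ) (hn : 1 ≤ n) (σ η : ℕ → Ω → ℝ) (c : ℝ)
    (hσpos : ∀ k, ∀ᵐ ω ∂μ, 0 < σ k ω)
    (hσint : ∀ k, Integrable (fun ω => (σ k ω)^2) μ)
    (hηint : ∀ k, Integrable (fun ω => (η k ω)^2) μ)
    (hindep : ∀ k, n - 1 ≤ k → IndepFun (η k) (σ (k - (n - 1))) μ)
    (hmom : ∀ k, ∫ ω, (η k ω)^2 ∂μ = c)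
    (hrec : ∀ k, n - 1 ≤ k → ∀ᵐ ω ∂μ, η k ω * σ (k - (n - 1)) ω ≤ σ (k + 1) ω)
    (hηpos : ∀ k, ∀ᵐ ω ∂μ, 0 < η k ω)
    (hmss : Tendsto (fun k => ∫ ω, (σ k ω)^2 ∂μ) atTop (nhds 0)) :
    c < 1 := by
  by_contra! hc
  refine not_tendsto_zero_of_le_mul_le_add hn hc
    (integral_pos_of_ae_pos ((hσpos 0).mono fun _ h => by positivity) (hσint 0))
    (fun m => integral_nonneg fun _ => sq_nonneg _) (fun m => ?_) hmss
  have hk : n - 1 ≤ m + (n - 1) := Nat.le_add_left _ _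
  have hsub : m + (n - 1) - (n - 1) = m := Nat.add_sub_cancel m (n - 1)
  have hsucc : m + (n - 1) + 1 = m + n := by omega
  have hindep_m := hindep _ hk
  have hrec_m := hrec _ hk
  rw [hsub] at hindep_m hrec_m
  rw [hsucc] at hrec_m
  rw [← hmom (m + (n - 1))]
  refine hindep_m.integral_sq_mul_integral_sq_le (hηint _).aestronglyMeasurable
    (hσint m).aestronglyMeasurable (hσint _) ?_ hrec_m
  filter_upwards [hηpos (m + (n - 1)), hσpos m] with ω hη hσ
  exact (mul_pos hη hσ).le
end

section
/- Let λ > 1, 0 ≤ ε < 1, 0 ≤ p < 1, and N ≥ 2 real. Define η taking value (λ+ε) with probability p and (λ + (N−1)ε)/N with probability 1−p. Then E[η²] < 1 if and only if N > (λ−ε)√(1−p) / (√(1 − p(λ+ε)²) − ε√(1−p)) and p < (1−ε²)/((λ+ε)² − ε²). -/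
/-!
Subtracting the first branch, `E[η²] < 1` says `(1 - p) m² < 1 - p (λ + ε)²` where
`m = ε + (λ - ε) / N ≥ 0` is the value of the second branch. Taking square roots, this is
`ε √(1 - p) + (λ - ε) √(1 - p) / N < √(1 - p (λ + ε)²)`, and since `N > 0` this holds iff the
denominator `√(1 - p (λ + ε)²) - ε √(1 - p)` is positive and `N` exceeds the stated bound.
Squaring again, positivity of that denominator is exactly the bound on `p`.
-/

open Real

theorem mul_sq_lt_iff_sqrt_mul_lt_sqrt {q a c : ℝ} (hq : 0 ≤ q) (ha : 0 ≤ a) :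
    q * a ^ 2 < c ↔ √q * a < √c := by
  rw [lt_sqrt (mul_nonneg (sqrt_nonneg q) ha), mul_pow, sq_sqrt hq]

theorem div_lt_iff_div_lt_and_pos {α : Type*} [Field α] [LinearOrder α] [IsStrictOrderedRing α]
    {a n d : α} (ha : 0 ≤ a) (hn : 0 < n) : a / n < d ↔ a / d < n ∧ 0 < d := by
  constructor
  · intro h
    have hd : 0 < d := (div_nonneg ha hn.le).trans_lt h
    exact ⟨(div_lt_iff₀ hd).2 ((div_lt_iff₀' hn).1 h), hd⟩
  · rintro ⟨h, hd⟩
    exact (div_lt_iff₀' hn).2 ((div_lt_iff₀ hd).1 h)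

theorem lt_div_sub_sq_iff_mul_sqrt_lt_sqrt {p ε x : ℝ} (hε : 0 ≤ ε) (hp : p ≤ 1)
    (hx : ε ^ 2 < x) : p < (1 - ε ^ 2) / (x - ε ^ 2) ↔ ε * √(1 - p) < √(1 - p * x) := by
  rw [lt_div_iff₀ (sub_pos.2 hx), lt_sqrt (mul_nonneg hε (sqrt_nonneg _)), mul_pow,
    sq_sqrt (sub_nonneg.2 hp)]
  constructor <;> intro h <;> linarith

theorem second_moment_lt_one_iff_case_large_N_general
    (l ε p N : ℝ) (hl : 1 < l) (hε0 : 0 ≤ ε) (hε1 : ε < 1)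
    (hp1 : p < 1) (hN : 2 ≤ N) :
    p * (l + ε)^2 + (1 - p) * ((l + (N - 1) * ε) / N)^2 < 1 ↔
      (N > (l - ε) * Real.sqrt (1 - p) /
            (Real.sqrt (1 - p * (l + ε)^2) - ε * Real.sqrt (1 - p)) ∧
       p < (1 - ε^2) / ((l + ε)^2 - ε^2)) := by
  have hN0 : 0 < N := by linarith
  have hlε : 0 ≤ l - ε := by linarith
  have hmean : (l + (N - 1) * ε) / N = ε + (l - ε) / N := by field_simp; ring
  have hmean_nonneg : 0 ≤ ε + (l - ε) / N := add_nonneg hε0 (div_nonneg hlε hN0.le)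
  have hsplit : √(1 - p) * (ε + (l - ε) / N) = ε * √(1 - p) + (l - ε) * √(1 - p) / N := by
    ring
  rw [hmean, ← lt_sub_iff_add_lt',
    mul_sq_lt_iff_sqrt_mul_lt_sqrt (by linarith) hmean_nonneg, hsplit, ← lt_sub_iff_add_lt',
    div_lt_iff_div_lt_and_pos (mul_nonneg hlε (sqrt_nonneg _)) hN0,
    lt_div_sub_sq_iff_mul_sqrt_lt_sqrt hε0 hp1.le (by nlinarith), sub_pos, gt_iff_lt]

theorem second_moment_lt_one_iff_case_large_N
    (l ε p N : ℝ) (hl : 1 < l) (hε0 : 0 ≤ ε) (hε1 : ε < 1)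
    (hp0 : 0 ≤ p) (hp1 : p < 1) (hN : 2 ≤ N) :
    p * (l + ε)^2 + (1 - p) * ((l + (N - 1) * ε) / N)^2 < 1 ↔
      (N > (l - ε) * Real.sqrt (1 - p) /
            (Real.sqrt (1 - p * (l + ε)^2) - ε * Real.sqrt (1 - p)) ∧
       p < (1 - ε^2) / ((l + ε)^2 - ε^2)) :=
  second_moment_lt_one_iff_case_large_N_general l ε p N hl hε0 hε1 hp1 hN
end

section
/- For λ > 1, 0 ≤ ε < 1 with λ − ε > 1, and p ∈ [0, p_nec) where p_nec = (1−ε²)/((λ+ε)²−ε²): R_nec = max{R⁰, R¹} satisfies R_nec ≥ max over λ' ∈ [λ−ε, λ+ε] of log₂(λ'√(1−p)/√(1 − p·λ'²)), and this maximum over λ' equals R⁰. -/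
theorem Rnec_dominates_nominal_bound
    (l ε p : ℝ) (hl : 1 < l) (hε0 : 0 ≤ ε) (hε1 : ε < 1) (hlε : 1 < l - ε)
    (hp0 : 0 ≤ p) (hp : p < (1 - ε^2) / ((l + ε)^2 - ε^2)) :
    IsGreatest
      ((fun l' => Real.logb 2 (l' * Real.sqrt (1 - p) / Real.sqrt (1 - p * l'^2))) ''
        Set.Icc (l - ε) (l + ε))
      (Real.logb 2 ((l + ε) * Real.sqrt (1 - p) / Real.sqrt (1 - p * (l + ε)^2))) ∧
    Real.logb 2 ((l + ε) * Real.sqrt (1 - p) / Real.sqrt (1 - p * (l + ε)^2)) ≤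
      max (Real.logb 2 ((l + ε) * Real.sqrt (1 - p) / Real.sqrt (1 - p * (l + ε)^2)))
          (Real.logb 2 ((l - ε) * Real.sqrt (1 - p) /
            (Real.sqrt (1 - p * (l + ε)^2) - ε * Real.sqrt (1 - p)))) := by
  have hs1 : 1 < l + ε := by linarith
  have hd : (0:ℝ) < (l + ε)^2 - ε^2 := by nlinarith
  have hmul : p * ((l + ε)^2 - ε^2) < 1 - ε^2 := by
    have := (lt_div_iff₀ hd).mp hp
    linarith
  have hp1 : p < 1 := by
    have h1 : 1 - ε^2 ≤ (l + ε)^2 - ε^2 := by nlinarith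
    nlinarith [mul_le_mul_of_nonneg_left h1 hp0]
  have hps : p * (l + ε)^2 < 1 := by
    nlinarith [mul_le_mul_of_nonneg_right hp1.le (sq_nonneg ε)]
  have hq : 0 < Real.sqrt (1 - p) := Real.sqrt_pos.mpr (by linarith)
  have hds : 0 < Real.sqrt (1 - p * (l + ε)^2) := Real.sqrt_pos.mpr (by linarith)
  constructor
  · constructor
    · exact ⟨l + ε, ⟨by linarith, le_refl _⟩, rfl⟩
    · rintro y ⟨a, ⟨ha1, ha2⟩, rfl⟩
      have ha0 : 0 < a := by linarith
      have hpa : p * a^2 < 1 := by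
        have h2 : a^2 ≤ (l + ε)^2 := by nlinarith
        nlinarith [mul_le_mul_of_nonneg_left h2 hp0]
      have hda : 0 < Real.sqrt (1 - p * a^2) := Real.sqrt_pos.mpr (by linarith)
      simp only
      apply Real.logb_le_logb_of_le one_lt_two
      · positivity
      · rw [div_le_div_iff₀ hda hds]
        have key : a * Real.sqrt (1 - p * (l + ε)^2) ≤
            (l + ε) * Real.sqrt (1 - p * a^2) := by
          rw [← Real.sqrt_sq ha0.le, ← Real.sqrt_mul (sq_nonneg a),
            ← Real.sqrt_sq (by linarith : (0:ℝ) ≤ l + ε), ← Real.sqrt_mul (sq_nonneg (l + ε))]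
          apply Real.sqrt_le_sqrt
          rw [Real.sq_sqrt (sq_nonneg (l + ε)), Real.sq_sqrt (sq_nonneg a)]
          nlinarith
        calc a * Real.sqrt (1 - p) * Real.sqrt (1 - p * (l + ε)^2)
            = a * Real.sqrt (1 - p * (l + ε)^2) * Real.sqrt (1 - p) := by ring
          _ ≤ (l + ε) * Real.sqrt (1 - p * a^2) * Real.sqrt (1 - p) := by
              exact mul_le_mul_of_nonneg_right key hq.le
          _ = (l + ε) * Real.sqrt (1 - p) * Real.sqrt (1 - p * a^2) := by ring
  · exact le_max_left _ _
end

section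
/- For λ > 1, 0 ≤ ε < 1 with λ − ε > 0 and 1 − ε(2λ + 2ε + 1) > 0, the bound R¹ = log₂((λ−ε)/(1−ε)) at p = 0 is strictly less than R_P = log₂((λ − ε(λ+ε))/(1 − ε(2λ + 2ε + 1))) whenever ε > 0, and R¹ < R_M = log₂(λ/(1−ε)) whenever ε > 0. -/
theorem R1_less_than_Phat_and_Martins
    (l ε : ℝ) (hl : 1 < l) (hε0 : 0 < ε) (hε1 : ε < 1) (hlε : 0 < l - ε)
    (hP : 0 < 1 - ε * (2 * l + 2 * ε + 1)) :
    Real.logb 2 ((l - ε) / (1 - ε)) <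
      Real.logb 2 ((l - ε * (l + ε)) / (1 - ε * (2 * l + 2 * ε + 1))) ∧
    Real.logb 2 ((l - ε) / (1 - ε)) < Real.logb 2 (l / (1 - ε)) := by
  have h1 : (0:ℝ) < 1 - ε := by linarith
  constructor
  · apply Real.logb_lt_logb one_lt_two (div_pos hlε h1)
    rw [div_lt_div_iff₀ h1 hP]
    nlinarith [sq_nonneg ε, mul_pos hε0 hlε, mul_pos (mul_pos hε0 hε0) hlε]
  · apply Real.logb_lt_logb one_lt_two (div_pos hlε h1)
    gcongr
    linarith
end
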